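/- Let p be an odd prime and t ≥ 2 an integer. Set n = p^t and suppose d = n^2 + 1 is squarefree with d ≡ 2 (mod 4). If the class number of Q(√d) equals 4, then the ideal class group of Q(√d) is isomorphic to Z/4Z (i.e., it is cyclic of order 4). -/

import Mathlib

/-!
Since `d = n² + 1 ≡ 2 (mod 4)` is squarefree, `𝓞 K = ℤ[√d]`. As `p ∣ n² = d - 1`, the prime `p`
splits as `(p) = 𝔭 𝔭'` with `𝔭 = (p, √d - 1)` and `𝔭' = (p, √d + 1)` its conjugate. If `𝔭²` were
principal, say `𝔭² = (γ)`, then `γ γ̄` generates `(𝔭 𝔭')² = (p²)`, so `N(γ) = ±p²`. Write `γ = g δ`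
with `δ = x + y√d` primitive. If `g = 1`, then `x² - (n² + 1) y² = ±p²` with `x, y` coprime; this is
impossible by descent: multiplying by the unit `n - √d` of norm `-1` shrinks `|y|` as long as
`p² ≤ n`, until `y` is squeezed below `p`. Otherwise `g = p`, so `𝔭² = (p) = 𝔭 𝔭'`; since `𝔭` and
`𝔭'` are coprime this forces `𝔭 = (p)`, which is absurd. Hence the class of `𝔭` has order `4` in a
group of order `4`.
-/

lemma sub_mul_mem_Ioo_of_sq_sub_mul_sq_eq {N x y c : ℤ} (hN : 0 ≤ N) (hx : 0 ≤ x) (hy : 0 ≤ y)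
    (h : x ^ 2 - (N ^ 2 + 1) * y ^ 2 = c) (hc₀ : 0 < y ^ 2 + c) (hc₁ : c < 2 * N * y ^ 2) :
    x - N * y ∈ Set.Ioo 0 y := by
  have hlo : (N * y) ^ 2 < x ^ 2 := by nlinarith
  have hhi : x ^ 2 < ((N + 1) * y) ^ 2 := by nlinarith
  have := lt_of_pow_lt_pow_left₀ 2 hx hlo
  have := lt_of_pow_lt_pow_left₀ 2 (by positivity) hhi
  constructor <;> linarith

/- On `z = x + y √(N² + 1)`, the map `(x, y) ↦ (N x - (N² + 1) y, x - N y)` is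
`z ↦ conj (z (N - √(N² + 1)))`, and the unit `N - √(N² + 1)` has norm `-1`. -/

lemma isCoprime_descent {N x y : ℤ} (h : IsCoprime x y) :
    IsCoprime (N * x - (N ^ 2 + 1) * y) (x - N * y) := by
  obtain ⟨u, v, huv⟩ := h
  exact ⟨-u * N - v, u * (N ^ 2 + 1) + v * N, by linear_combination huv⟩

lemma sq_sub_mul_sq_descent (N x y : ℤ) :
    (N * x - (N ^ 2 + 1) * y) ^ 2 - (N ^ 2 + 1) * (x - N * y) ^ 2
      = -(x ^ 2 - (N ^ 2 + 1) * y ^ 2) := by ring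

lemma sq_sub_mul_sq_ne_of_isCoprime {N P : ℤ} (hP : 3 ≤ P) (hPN : P ^ 2 ≤ N) {x y c : ℤ}
    (hxy : IsCoprime x y) (hc : c = P ^ 2 ∨ c = -P ^ 2) :
    x ^ 2 - (N ^ 2 + 1) * y ^ 2 ≠ c := by
  induction h : y.natAbs using Nat.strong_induction_on generalizing x y c with
  | _ k ih =>
  wlog hx : 0 ≤ x generalizing x
  · simpa using this hxy.neg_left (by omega)
  wlog hy : 0 ≤ y generalizing y
  · simpa using this (by simpa using h) hxy.neg_right (by omega)
  intro heq
  have hN : 0 ≤ N := by nlinarith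
  obtain rfl | hy₀ := hy.eq_or_lt
  · obtain rfl | rfl := Int.isUnit_iff.mp (isCoprime_zero_right.mp hxy) <;>
      rcases hc with rfl | rfl <;> nlinarith
  have hy₁ : 1 ≤ y ^ 2 := one_le_pow₀ (by omega)
  have descend (hc₀ : 0 < y ^ 2 + c) : False := by
    obtain ⟨hpos, hlt⟩ := sub_mul_mem_Ioo_of_sq_sub_mul_sq_eq hN hx hy heq hc₀ (by
      rcases hc with rfl | rfl <;> nlinarith)
    refine ih _ (by omega) (isCoprime_descent (N := N) hxy) (c := -c)
      (by rcases hc with rfl | rfl <;> simp) rfl ?_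
    rw [sq_sub_mul_sq_descent, heq]
  rcases hc with rfl | rfl
  · exact descend (by positivity)
  obtain hyP | rfl | hPy := lt_trichotomy y P
  · have hlo : (N * y - 1) ^ 2 < x ^ 2 := by nlinarith
    have hhi : x ^ 2 < (N * y) ^ 2 := by nlinarith
    have := lt_of_pow_lt_pow_left₀ 2 hx hlo
    have := lt_of_pow_lt_pow_left₀ 2 (by positivity) hhi
    omega
  · have hx : x = N * y := (pow_left_inj₀ hx (by positivity) two_ne_zero).mp (by linarith)
    have := Int.isUnit_iff.mp (hxy.isUnit_of_dvd' (hx ▸ dvd_mul_left y N) dvd_rfl)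
    omega
  · exact descend (by nlinarith)

namespace Ideal

variable {R : Type*} [CommRing R] {p w : R}

lemma span_pair_sub_one_sup_span_pair_add_one (h2 : IsCoprime (2 : R) p) :
    span {p, w - 1} ⊔ span {p, w + 1} = ⊤ := by
  obtain ⟨a, b, hab⟩ := h2
  have hp : p ∈ span {p, w - 1} ⊔ span {p, w + 1} := mem_sup_left (subset_span (by simp))
  have h2 : (2 : R) ∈ span {p, w - 1} ⊔ span {p, w + 1} := by
    rw [show (2 : R) = (w + 1) - (w - 1) by ring]
    exact sub_mem (mem_sup_right (subset_span (by simp))) (mem_sup_left (subset_span (by simp)))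
  have h1 := add_mem (mul_mem_left _ a h2) (mul_mem_left _ b hp)
  rwa [hab, ← eq_top_iff_one] at h1

lemma span_pair_sub_one_mul_span_pair_add_one (h2 : IsCoprime (2 : R) p) (hw : p ∣ w ^ 2 - 1) :
    span {p, w - 1} * span {p, w + 1} = span {p} := by
  rw [span_pair_mul_span_pair]
  apply le_antisymm
  · simp only [span_le, Set.insert_subset_iff, Set.singleton_subset_iff, SetLike.mem_coe,
      mem_span_singleton]
    refine ⟨dvd_mul_right _ _, dvd_mul_right _ _, dvd_mul_left _ _, ?_⟩
    rwa [show (w - 1) * (w + 1) = w ^ 2 - 1 by ring]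
  · obtain ⟨a, b, hab⟩ := h2
    set M := span {p * p, p * (w + 1), (w - 1) * p, (w - 1) * (w + 1)}
    have gen : ∀ x ∈ ({p * p, p * (w + 1), (w - 1) * p, (w - 1) * (w + 1)} : Set R), x ∈ M :=
      fun _ hx ↦ subset_span hx
    have hp := add_mem (mul_mem_left M a (sub_mem (gen (p * (w + 1)) (by simp))
      (gen ((w - 1) * p) (by simp)))) (mul_mem_left M b (gen (p * p) (by simp)))
    rwa [show a * (p * (w + 1) - (w - 1) * p) + b * (p * p) = p by linear_combination p * hab,
      ← span_singleton_le_iff_mem] at hp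

lemma eq_mul_of_sq_eq_mul_of_sup_eq_top {I J : Ideal R} (hsup : I ⊔ J = ⊤) (h : I ^ 2 = I * J) :
    I = I * J :=
  calc I = I * (I ⊔ J) := by rw [hsup, mul_top]
    _ = I * J := by rw [mul_sup, ← sq, h, sup_idem]

end Ideal

namespace Zsqrtd

open Ideal

variable {d : ℤ}

lemma map_star_span_natCast_sqrtd_sub_one (p : ℕ) :
    (span {(p : ℤ√d), sqrtd - 1}).map (starRingEnd (ℤ√d)) = span {(p : ℤ√d), sqrtd + 1} := by
  have hstar : star (sqrtd - 1 : ℤ√d) = -(sqrtd + 1) := by ext <;> simp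
  rw [map_span, Set.image_pair, starRingEnd_apply, starRingEnd_apply, star_natCast, hstar,
    span_insert, span_singleton_neg, ← span_insert]

lemma natCast_dvd_sqrtd_sq_sub_one {N : ℤ} (hd : d = N ^ 2 + 1) {p : ℕ} (hpN : (p : ℤ) ∣ N) :
    (p : ℤ√d) ∣ sqrtd ^ 2 - 1 := by
  rw [sq, dmuld, ← Int.cast_one, ← Int.cast_sub, show d - 1 = N ^ 2 by rw [hd]; ring,
    ← Int.cast_natCast, intCast_dvd_intCast]
  exact hpN.mul_left N |>.trans (by rw [sq])

lemma not_natCast_dvd_sqrtd_sub_one {p : ℕ} (hp : p ≠ 1) : ¬ (p : ℤ√d) ∣ sqrtd - 1 := by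
  rw [← Int.cast_natCast, intCast_dvd]
  rintro ⟨-, h⟩
  have : (p : ℤ) ∣ 1 := by simpa using h
  exact hp (Nat.dvd_one.mp (by exact_mod_cast this))

lemma eq_or_eq_neg_of_span_intCast_eq {a b : ℤ} (h : span {(a : ℤ√d)} = span {(b : ℤ√d)}) :
    a = b ∨ a = -b := by
  rw [le_antisymm_iff, span_singleton_le_span_singleton, span_singleton_le_span_singleton,
    intCast_dvd_intCast, intCast_dvd_intCast] at h
  exact Int.natAbs_eq_natAbs_iff.mp (Int.natAbs_eq_of_dvd_dvd h.2 h.1)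

lemma norm_eq_or_eq_neg_of_span_mul_map_star {γ : ℤ√d} {m : ℤ}
    (h : span {γ} * (span {γ}).map (starRingEnd (ℤ√d)) = span {(m : ℤ√d)}) :
    γ.norm = m ∨ γ.norm = -m := by
  rw [map_span, Set.image_singleton, span_singleton_mul_span_singleton, starRingEnd_apply,
    ← norm_eq_mul_conj] at h
  exact eq_or_eq_neg_of_span_intCast_eq h

lemma associated_natCast_of_norm_eq {N : ℤ} (hd : d = N ^ 2 + 1) {p : ℕ} (hp : p.Prime)
    (hp3 : 3 ≤ p) (hpN : (p : ℤ) ^ 2 ≤ N) {γ : ℤ√d} (hγ : γ.norm = p ^ 2 ∨ γ.norm = -p ^ 2) :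
    Associated (p : ℤ√d) γ := by
  have hp0 : (p : ℤ) ^ 2 ≠ 0 := by positivity
  have hgcd : 0 < Int.gcd γ.re γ.im := by
    refine Int.gcd_pos_iff.mpr (not_and_or.mp fun h0 ↦ ?_)
    rw [norm_def, h0.1, h0.2] at hγ
    omega
  obtain ⟨g, x, y, -, hxy, hre, him⟩ := Int.exists_gcd_one' hgcd
  have hγg : γ = (g : ℤ√d) * ⟨x, y⟩ := by ext <;> simp [hre, him, mul_comm]
  have hnorm : γ.norm = g ^ 2 * (x ^ 2 - (N ^ 2 + 1) * y ^ 2) := by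
    rw [norm_def, hre, him, hd]; ring
  have hgp : g ∣ p := by
    have : (g : ℤ) ^ 2 ∣ (p : ℤ) ^ 2 := by
      rcases hγ with h | h
      · exact ⟨_, h ▸ hnorm⟩
      · exact dvd_neg.mp ⟨_, h ▸ hnorm⟩
    exact Int.natCast_dvd_natCast.mp ((Int.pow_dvd_pow_iff two_ne_zero).mp this)
  rcases (Nat.dvd_prime hp).mp hgp with rfl | rfl
  · refine absurd ?_ (sq_sub_mul_sq_ne_of_isCoprime (by exact_mod_cast hp3) hpN
      (Int.isCoprime_iff_gcd_eq_one.mpr hxy) hγ)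
    simpa using hnorm.symm
  · have hunit : IsUnit (⟨x, y⟩ : ℤ√d) := by
      rw [isUnit_iff_norm_isUnit, norm_def, Int.isUnit_iff, hd]
      rcases hγ with h | h <;> [left; right] <;>
        exact mul_left_cancel₀ hp0 (by linear_combination h - hnorm)
    exact ⟨hunit.unit, hγg.symm⟩

theorem not_isPrincipal_sq_span_natCast_sqrtd_sub_one {N : ℤ} (hd : d = N ^ 2 + 1) (hN : 0 < N)
    {p : ℕ} (hp : p.Prime) (hodd : p ≠ 2) (hpN : (p : ℤ) ^ 2 ∣ N) :
    ¬ (span {(p : ℤ√d), sqrtd - 1} ^ 2).IsPrincipal := by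
  rintro ⟨γ, hγ⟩
  change _ = span {γ} at hγ
  set I := span {(p : ℤ√d), sqrtd - 1}
  set J := span {(p : ℤ√d), sqrtd + 1}
  have hp3 : 3 ≤ p := by have := hp.two_le; omega
  have h2p : IsCoprime (2 : ℤ√d) p := by
    have : IsCoprime (2 : ℤ) p :=
      Nat.isCoprime_iff_coprime.mpr (Nat.coprime_two_left.mpr (hp.odd_of_ne_two hodd))
    simpa using this.map (Int.castRingHom (ℤ√d))
  have hIJ : I * J = span {(p : ℤ√d)} := span_pair_sub_one_mul_span_pair_add_one h2p
    (natCast_dvd_sqrtd_sq_sub_one hd ((dvd_pow_self _ two_ne_zero).trans hpN))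
  have hsup : I ⊔ J = ⊤ := span_pair_sub_one_sup_span_pair_add_one h2p
  have hnorm : γ.norm = p ^ 2 ∨ γ.norm = -p ^ 2 := norm_eq_or_eq_neg_of_span_mul_map_star (by
    rw [← hγ, Ideal.map_pow, map_star_span_natCast_sqrtd_sub_one, ← mul_pow, hIJ,
      span_singleton_pow]
    push_cast; rfl)
  obtain ⟨u, hu⟩ := associated_natCast_of_norm_eq hd hp hp3 (Int.le_of_dvd hN hpN) hnorm
  have hI2 : I ^ 2 = span {(p : ℤ√d)} := by rw [hγ, ← hu, span_singleton_mul_right_unit u.isUnit]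
  have hI : I = span {(p : ℤ√d)} :=
    (eq_mul_of_sq_eq_mul_of_sup_eq_top hsup (hI2.trans hIJ.symm)).trans hIJ
  have hdvd : (p : ℤ√d) ∣ sqrtd - 1 := mem_span_singleton.mp (hI ▸ subset_span (by simp))
  exact not_natCast_dvd_sqrtd_sub_one hp.ne_one hdvd

end Zsqrtd

lemma not_isSquare_of_squarefree {d : ℤ} (hsf : Squarefree d) (h1 : d ≠ 1) : ¬ IsSquare d := by
  rintro ⟨r, rfl⟩
  obtain rfl | rfl := Int.isUnit_iff.mp (hsf r dvd_rfl) <;> simp at h1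

lemma Rat.exists_intCast_eq_of_sq_eq_intCast {s : ℚ} {n : ℤ} (h : s ^ 2 = n) : ∃ a : ℤ, s = a := by
  have hden : s.den ^ 2 = 1 := by rw [← Rat.den_pow, h, Rat.den_intCast]
  exact ⟨s.num,
    (Rat.coe_int_num_of_den_eq_one ((Nat.pow_eq_one.mp hden).resolve_right two_ne_zero)).symm⟩

lemma Int.two_dvd_of_four_dvd_sq_sub_mul_sq {d u s : ℤ} (hd : d % 4 = 2 ∨ d % 4 = 3)
    (h : 4 ∣ u ^ 2 - d * s ^ 2) : 2 ∣ u ∧ 2 ∣ s := by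
  obtain ⟨e, he⟩ := h
  obtain ⟨c, hc⟩ : ∃ c, d = 4 * c + d % 4 := ⟨d / 4, by omega⟩
  rcases Int.even_or_odd' u with ⟨k, rfl | rfl⟩ <;>
    rcases Int.even_or_odd' s with ⟨l, rfl | rfl⟩ <;>
    rcases hd with h | h <;> rw [h] at hc <;> subst hc <;> ring_nf at he <;> omega

lemma exists_intCast_eq_of_two_mul_of_sq_sub_mul_sq {d : ℤ} (hsf : Squarefree d)
    (hd : d % 4 = 2 ∨ d % 4 = 3) {q r : ℚ} {u m : ℤ} (hu : 2 * q = u) (hm : q ^ 2 - d * r ^ 2 = m) :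
    (∃ a : ℤ, q = a) ∧ ∃ b : ℤ, r = b := by
  have hd0 : (d : ℚ) ≠ 0 := by exact_mod_cast hsf.ne_zero
  obtain ⟨v, hv⟩ :=
    Rat.exists_intCast_eq_of_sq_eq_intCast (s := d * (2 * r)) (n := d * (u ^ 2 - 4 * m))
    (by push_cast; rw [← hu, ← hm]; ring)
  obtain ⟨s, rfl⟩ : d ∣ v := by
    refine (hsf.dvd_pow_iff_dvd two_ne_zero).mp ⟨u ^ 2 - 4 * m, ?_⟩
    have : (v : ℚ) ^ 2 = d * (u ^ 2 - 4 * m) := by rw [← hv, ← hu, ← hm]; ring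
    exact_mod_cast this
  have hs : (s : ℚ) = 2 * r := mul_left_cancel₀ hd0 (by push_cast at hv; exact hv.symm)
  obtain ⟨⟨a, rfl⟩, ⟨b, rfl⟩⟩ := Int.two_dvd_of_four_dvd_sq_sub_mul_sq hd ⟨m, by
    have : (u : ℚ) ^ 2 - d * s ^ 2 = 4 * m := by rw [← hu, hs, ← hm]; ring
    exact_mod_cast this⟩
  push_cast at hu hs
  exact ⟨⟨a, by linarith⟩, ⟨b, by linarith⟩⟩

open Polynomial NumberField

section QuadraticField

variable {K : Type*} [Field K] [NumberField K] {d : ℤ} {α : K}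

lemma ratCast_ne_of_sq_eq (hα : α ^ 2 = d) (hd : ¬ IsSquare d) (q : ℚ) : (q : K) ≠ α := by
  rintro rfl
  exact hd (Rat.isSquare_intCast_iff.mp ⟨q, by rw [← sq]; exact_mod_cast hα.symm⟩)

lemma exists_ratCast_eq_add_mul (hK : Module.finrank ℚ K = 2) (hα : ∀ q : ℚ, (q : K) ≠ α) (x : K) :
    ∃ q r : ℚ, x = q + r * α := by
  have hli : LinearIndependent ℚ ![(1 : K), α] := by
    refine linearIndependent_fin2.mpr ⟨fun h ↦ hα 0 (by simpa using h.symm), fun a h ↦ ?_⟩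
    have h' : (a : K) * α = 1 := by simpa [Rat.smul_def] using h
    exact hα a⁻¹ (by rw [Rat.cast_inv]; exact (eq_inv_of_mul_eq_one_right h').symm)
  have hspan := hli.span_eq_top_of_card_eq_finrank' (by simp [hK])
  rw [Matrix.range_cons_cons_empty] at hspan
  obtain ⟨q, r, hqr⟩ := Submodule.mem_span_pair.mp (hspan ▸ Submodule.mem_top (x := x))
  exact ⟨q, r, by rw [← hqr, Rat.smul_def, Rat.smul_def, mul_one]⟩

lemma exists_intCast_eq_of_sq_sub_mul_add_eq_zero {x : K} (hx : IsIntegral ℤ x)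
    (hxq : ∀ q : ℚ, (q : K) ≠ x) {b c : ℚ} (h : x ^ 2 - b * x + c = 0) :
    (∃ B : ℤ, b = B) ∧ ∃ C : ℤ, c = C := by
  have hxQ : IsIntegral ℚ x := hx.tower_top
  have hmin : minpoly ℚ x = X ^ 2 - C b * X + C c := by
    refine (eq_of_monic_of_dvd_of_natDegree_le (minpoly.monic hxQ) (by monicity!)
      (minpoly.dvd ℚ x (by simp [h])) ?_).symm
    rw [show (X ^ 2 - C b * X + C c : ℚ[X]).natDegree = 2 by compute_degree!]
    exact (minpoly.two_le_natDegree_iff hxQ).mpr fun ⟨q, hq⟩ ↦ hxq q (by simpa using hq)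
  rw [minpoly.isIntegrallyClosed_eq_field_fractions' ℚ hx] at hmin
  exact ⟨⟨-(minpoly ℤ x).coeff 1, by simpa using congrArg (-coeff · 1) hmin.symm⟩,
    ⟨(minpoly ℤ x).coeff 0, by simpa using congrArg (coeff · 0) hmin.symm⟩⟩

lemma exists_intCast_eq_add_mul (hK : Module.finrank ℚ K = 2) (hα : α ^ 2 = d) (hsf : Squarefree d)
    (hd : d % 4 = 2 ∨ d % 4 = 3) (x : 𝓞 K) : ∃ a b : ℤ, (x : K) = a + b * α := by
  have hαq := ratCast_ne_of_sq_eq hα (not_isSquare_of_squarefree hsf (by omega))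
  obtain ⟨q, r, hx⟩ := exists_ratCast_eq_add_mul hK hαq x
  by_cases hr : r = 0
  · have hq : IsIntegral ℤ q := by simpa [hr, hx] using x.isIntegral_coe
    obtain ⟨a, ha⟩ := IsIntegrallyClosed.isIntegral_iff.mp hq
    exact ⟨a, 0, by simp [hx, hr, ← ha]⟩
  have hxq (q' : ℚ) : (q' : K) ≠ x := fun h ↦ hαq ((q' - q) / r) (by
    push_cast
    rw [div_eq_iff (by exact_mod_cast hr), h, hx]
    ring)
  obtain ⟨⟨u, hu⟩, ⟨m, hm⟩⟩ := exists_intCast_eq_of_sq_sub_mul_add_eq_zero (b := 2 * q)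
    (c := q ^ 2 - d * r ^ 2) (x := (x : K)) x.isIntegral_coe hxq
    (by rw [hx]; push_cast; linear_combination r ^ 2 * hα)
  obtain ⟨⟨a, rfl⟩, ⟨b, rfl⟩⟩ := exists_intCast_eq_of_two_mul_of_sq_sub_mul_sq hsf hd hu hm
  exact ⟨a, b, by exact_mod_cast hx⟩

noncomputable def zsqrtdEquivRingOfIntegers (hK : Module.finrank ℚ K = 2) (hα : α ^ 2 = d)
    (hsf : Squarefree d) (hd : d % 4 = 2 ∨ d % 4 = 3) : ℤ√d ≃+* 𝓞 K :=
  let w : 𝓞 K := ⟨α, (mem_integralClosure_iff ℤ K).mpr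
    (IsIntegral.of_pow two_pos (hα ▸ isIntegral_algebraMap (x := d)))⟩
  have hwα : (w : K) = α := rfl
  have hw : w * w = d := RingOfIntegers.ext (by simp [hwα, ← sq, hα])
  RingEquiv.ofBijective (Zsqrtd.lift ⟨w, hw⟩)
    ⟨Zsqrtd.lift_injective _ fun n h ↦ not_isSquare_of_squarefree hsf (by omega) ⟨n, h⟩, fun x ↦ by
      obtain ⟨a, b, hx⟩ := exists_intCast_eq_add_mul hK hα hsf hd x
      exact ⟨⟨a, b⟩, RingOfIntegers.ext (by simp [hwα, hx])⟩⟩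

end QuadraticField

lemma Ideal.isPrincipal_of_map_ringEquiv {R S : Type*} [CommSemiring R] [CommSemiring S]
    (f : R ≃+* S) {I : Ideal R} (h : (I.map f).IsPrincipal) : I.IsPrincipal := by
  obtain ⟨x, hx⟩ := h
  refine ⟨f.symm x, ?_⟩
  rw [← Ideal.map_of_equiv (I := I) f]
  change Ideal.map _ (Ideal.map f I) = Ideal.span _
  rw [hx]
  change Ideal.map _ (Ideal.span _) = Ideal.span _
  rw [Ideal.map_span, Set.image_singleton]
  rfl

lemma isCyclic_of_card_eq_prime_pow_of_pow_ne_one {G : Type*} [Group G] {p n : ℕ} [Fact p.Prime]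
    (hG : Nat.card G = p ^ (n + 1)) {g : G} (hg : g ^ p ^ n ≠ 1) : IsCyclic G :=
  have : Finite G := Nat.finite_of_card_ne_zero (by simp [hG, Fact.out (p := p.Prime) |>.ne_zero])
  isCyclic_of_orderOf_eq_card g (hG ▸ orderOf_eq_prime_pow hg (hG ▸ pow_card_eq_one'))

/-- If `n = p^t` with `p` an odd prime and `t ≥ 2`, `d = n^2 + 1` is
squarefree with `d ≡ 2 (mod 4)`, and the class number of `ℚ(√d)` is `4`, then
the class group of `ℚ(√d)` is cyclic of order `4`. -/
theorem class_group_cyclic_of_odd_prime_pow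
    (p : ℕ) (hp : p.Prime) (hodd : p ≠ 2) (t : ℕ) (ht : 2 ≤ t)
    (n : ℕ) (hn : n = p ^ t) (d : ℕ) (hd : d = n ^ 2 + 1)
    (hsf : Squarefree d) (hmod : d % 4 = 2)
    (K : Type) [Field K] [NumberField K]
    (hdeg : Module.finrank ℚ K = 2) (α : K) (hα : α ^ 2 = (d : K))
    (hcl : NumberField.classNumber K = 4) :
    Nonempty (ClassGroup (NumberField.RingOfIntegers K) ≃* Multiplicative (ZMod 4)) := by
  have hdn : (d : ℤ) = (n : ℤ) ^ 2 + 1 := by exact_mod_cast hd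
  have hn0 : (0 : ℤ) < n := by rw [hn]; exact_mod_cast pow_pos hp.pos t
  have hpn : (p : ℤ) ^ 2 ∣ n := by rw [hn]; exact_mod_cast pow_dvd_pow p ht
  let f : ℤ√d ≃+* 𝓞 K := zsqrtdEquivRingOfIntegers hdeg (by exact_mod_cast hα)
    (Int.squarefree_natCast.mpr hsf) (Or.inl (by omega))
  set I := (Ideal.span {(p : ℤ√d), Zsqrtd.sqrtd - 1}).map f
  have hI0 : I ∈ nonZeroDivisors (Ideal (𝓞 K)) := by
    refine mem_nonZeroDivisors_of_ne_zero
      ((Ideal.map_eq_bot_iff_of_injective f.injective).not.mpr fun h ↦ ?_)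
    exact hp.ne_zero (by exact_mod_cast Ideal.span_eq_bot.mp h (p : ℤ√d) (by simp))
  have hI2 : ¬ (I ^ 2).IsPrincipal := fun h ↦
    Zsqrtd.not_isPrincipal_sq_span_natCast_sqrtd_sub_one hdn hn0 hp hodd hpn
      (Ideal.isPrincipal_of_map_ringEquiv f (by rwa [Ideal.map_pow]))
  have hcard : Nat.card (ClassGroup (𝓞 K)) = 4 := by rw [Nat.card_eq_fintype_card]; exact hcl
  have : IsCyclic (ClassGroup (𝓞 K)) :=
    isCyclic_of_card_eq_prime_pow_of_pow_ne_one (p := 2) (n := 1) (g := ClassGroup.mk0 ⟨I, hI0⟩)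
      hcard (by rwa [pow_one, ← map_pow, SubmonoidClass.mk_pow, Ne, ClassGroup.mk0_eq_one_iff])
  exact ⟨mulEquivOfCyclicCardEq (hcard.trans (by simp))⟩
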